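/- Let G be the uniform disk graph on an n-point set P ⊆ [0,1]² with radius r (edges between points at Euclidean distance ≤ r), where every cell of the √n × √n grid contains at most b points. For any two vertices v, u with ‖v − u‖ ≤ r, the number of vertices adjacent to exactly one of v, u is at most C·b·(r·‖v−u‖·n + r·√n + 1) for an absolute constant C. -/

import Mathlib

open scoped Classical

/-- `p` lies in cell `(i, j)` of the regular `m × m` grid on the unit square
(cells are closed squares of side `1/m`). -/
def InCell (m : ℕ) (i j : Fin m) (p : EuclideanSpace ℝ (Fin 2)) : Prop :=
  (i : ℝ) / m ≤ p 0 ∧ p 0 ≤ ((i : ℝ) + 1) / m ∧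
  (j : ℝ) / m ≤ p 1 ∧ p 1 ≤ ((j : ℝ) + 1) / m

/-!
By the triangle inequality, a vertex `p ∉ {v, u}` adjacent to exactly one of `v`, `u` lies in the
annulus `r - d ≤ ‖p - v‖ ≤ r + d`, where `d = ‖v - u‖`. Every such point lies in a grid cell
meeting the annulus, and each cell holds at most `b` points. The interiors of those cells are
disjoint squares of area `1/m²` contained in the annulus widened by the cell diameter `√2/m`, so
comparing areas bounds their number by `2π m² (r + d + √2/m)(2d + 2√2/m) = O(r d m² + r m + 1)`.
-/

open MeasureTheory Metric Finset Real

local notation "ℝ²" => EuclideanSpace ℝ (Fin 2)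

lemma exists_fin_div_le_le {m : ℕ} (hm : 0 < m) {x : ℝ} (hx₀ : 0 ≤ x) (hx₁ : x ≤ 1) :
    ∃ i : Fin m, (i : ℝ) / m ≤ x ∧ x ≤ ((i : ℝ) + 1) / m := by
  have hm' : (0 : ℝ) < m := by exact_mod_cast hm
  refine ⟨⟨min ⌊x * m⌋₊ (m - 1), by omega⟩, ?_, ?_⟩ <;>
    simp only [div_le_iff₀ hm', le_div_iff₀ hm']
  · calc ((min ⌊x * m⌋₊ (m - 1) : ℕ) : ℝ) ≤ ⌊x * m⌋₊ := by exact_mod_cast min_le_left _ _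
      _ ≤ x * m := Nat.floor_le (by positivity)
  · rcases le_total ⌊x * m⌋₊ (m - 1) with h | h
    · rw [min_eq_left h]
      exact (Nat.lt_floor_add_one _).le
    · rw [min_eq_right h, Nat.cast_sub hm, Nat.cast_one, sub_add_cancel]
      exact mul_le_of_le_one_left hm'.le hx₁

lemma exists_inCell {m : ℕ} (hm : 0 < m) {p : ℝ²} (hp : ∀ k, 0 ≤ p k ∧ p k ≤ 1) :
    ∃ i j, InCell m i j p := by
  obtain ⟨i, hi⟩ := exists_fin_div_le_le hm (hp 0).1 (hp 0).2
  obtain ⟨j, hj⟩ := exists_fin_div_le_le hm (hp 1).1 (hp 1).2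
  exact ⟨i, j, hi.1, hi.2, hj.1, hj.2⟩

noncomputable def cellsMeeting (m : ℕ) (A : Set ℝ²) : Finset (Fin m × Fin m) :=
  univ.filter fun ij => ∃ p ∈ A, InCell m ij.1 ij.2 p

lemma card_filter_mem_le_card_cellsMeeting_mul {m b : ℕ} (hm : 0 < m) {P : Finset ℝ²}
    (hP : ∀ p ∈ P, ∀ k, 0 ≤ p k ∧ p k ≤ 1)
    (hb : ∀ i j : Fin m, #(P.filter fun p => InCell m i j p) ≤ b) (A : Set ℝ²)
    [DecidablePred (· ∈ A)] :
    #(P.filter (· ∈ A)) ≤ #(cellsMeeting m A) * b := by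
  have hcover : P.filter (· ∈ A) ⊆
      (cellsMeeting m A).biUnion fun ij => P.filter fun p => InCell m ij.1 ij.2 p := by
    intro p hpA
    obtain ⟨hpP, hpA⟩ := mem_filter.1 hpA
    obtain ⟨i, j, hij⟩ := exists_inCell hm (hP p hpP)
    exact mem_biUnion.2 ⟨(i, j), mem_filter.2 ⟨mem_univ _, p, hpA, hij⟩, mem_filter.2 ⟨hpP, hij⟩⟩
  calc #(P.filter (· ∈ A)) ≤ ∑ ij ∈ cellsMeeting m A, #(P.filter fun p => InCell m ij.1 ij.2 p) :=
        (card_le_card hcover).trans card_biUnion_le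
    _ ≤ #(cellsMeeting m A) * b := sum_le_card_nsmul _ _ _ fun ij _ => hb ij.1 ij.2

def openCell (m : ℕ) (i j : Fin m) : Set ℝ² :=
  {q | (i : ℝ) / m < q 0 ∧ q 0 < ((i : ℝ) + 1) / m ∧ (j : ℝ) / m < q 1 ∧ q 1 < ((j : ℝ) + 1) / m}

lemma openCell_eq_preimage (m : ℕ) (i j : Fin m) :
    openCell m i j = (MeasurableEquiv.toLp 2 (Fin 2 → ℝ)).symm ⁻¹'
      Set.univ.pi ![Set.Ioo ((i : ℝ) / m) ((i + 1) / m), Set.Ioo ((j : ℝ) / m) ((j + 1) / m)] := by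
  ext q
  simp [openCell, Fin.forall_fin_two, and_assoc]

lemma measurableSet_openCell (m : ℕ) (i j : Fin m) : MeasurableSet (openCell m i j) := by
  rw [openCell_eq_preimage]
  exact (MeasurableSet.univ_pi fun k => by fin_cases k <;> exact measurableSet_Ioo).preimage
    (MeasurableEquiv.measurable _)

lemma volume_openCell (m : ℕ) (i j : Fin m) :
    volume (openCell m i j) = ENNReal.ofReal (1 / m) ^ 2 := by
  rw [openCell_eq_preimage, (EuclideanSpace.volume_preserving_symm_measurableEquiv_toLp
    (Fin 2)).measure_preimage (MeasurableSet.univ_pi fun k => by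
      fin_cases k <;> exact measurableSet_Ioo).nullMeasurableSet, volume_pi_pi]
  simp [Real.volume_Ioo, Fin.prod_univ_two, sq, add_div]

lemma floor_mul_eq_of_div_lt_of_lt_div {m i : ℕ} (hm : 0 < m) {x : ℝ} (h₁ : (i : ℝ) / m < x)
    (h₂ : x < ((i : ℝ) + 1) / m) : ⌊x * m⌋₊ = i := by
  have hm' : (0 : ℝ) < m := by exact_mod_cast hm
  rw [div_lt_iff₀ hm'] at h₁
  rw [lt_div_iff₀ hm'] at h₂
  exact (Nat.floor_eq_iff ((Nat.cast_nonneg i).trans h₁.le)).2 ⟨h₁.le, h₂⟩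

lemma pairwiseDisjoint_openCell (m : ℕ) :
    (Set.univ : Set (Fin m × Fin m)).PairwiseDisjoint fun ij => openCell m ij.1 ij.2 := by
  rintro ⟨i, j⟩ - ⟨i', j'⟩ - hne
  refine Set.disjoint_left.2 fun q ⟨hi₁, hi₂, hj₁, hj₂⟩ ⟨hi₁', hi₂', hj₁', hj₂'⟩ => hne ?_
  have hi := (floor_mul_eq_of_div_lt_of_lt_div i.pos hi₁ hi₂).symm.trans
    (floor_mul_eq_of_div_lt_of_lt_div i.pos hi₁' hi₂')
  have hj := (floor_mul_eq_of_div_lt_of_lt_div i.pos hj₁ hj₂).symm.trans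
    (floor_mul_eq_of_div_lt_of_lt_div i.pos hj₁' hj₂')
  exact Prod.ext (Fin.ext hi) (Fin.ext hj)

lemma card_le_sq_mul_measureReal {m : ℕ} (S : Finset (Fin m × Fin m)) {T : Set ℝ²}
    (hT : volume T ≠ ⊤) (hST : ∀ ij ∈ S, openCell m ij.1 ij.2 ⊆ T) :
    (#S : ℝ) ≤ m ^ 2 * volume.real T := by
  rcases Nat.eq_zero_or_pos m with rfl | hm
  · simp [Finset.eq_empty_of_isEmpty S]
  have hm' : (m : ℝ) ^ 2 ≠ 0 := by positivity
  have hcells : volume.real (⋃ ij ∈ S, openCell m ij.1 ij.2) = #S / m ^ 2 := by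
    rw [measureReal_biUnion_finset ((pairwiseDisjoint_openCell m).subset (Set.subset_univ _))
      (fun ij _ => measurableSet_openCell m ij.1 ij.2) fun ij _ => by simp [volume_openCell]]
    simp [measureReal_def, volume_openCell, div_eq_mul_inv]
  calc (#S : ℝ) = m ^ 2 * (#S / m ^ 2) := by field_simp
    _ ≤ m ^ 2 * volume.real T := by
      rw [← hcells]
      gcongr
      exact Set.iUnion₂_subset hST

lemma dist_le_of_mem_openCell_of_inCell {m : ℕ} {i j : Fin m} {p q : ℝ²}
    (hq : q ∈ openCell m i j) (hp : InCell m i j p) : dist q p ≤ √2 / m := by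
  have coord {a x y : ℝ} (hx₁ : a / m < x) (hx₂ : x < (a + 1) / m) (hy₁ : a / m ≤ y)
      (hy₂ : y ≤ (a + 1) / m) : dist x y ^ 2 ≤ (1 / m) ^ 2 := by
    have hwidth : (a + 1) / m - a / m = 1 / m := by ring
    refine pow_le_pow_left₀ dist_nonneg ?_ 2
    rw [Real.dist_eq, abs_sub_le_iff]
    constructor <;> linarith
  obtain ⟨hq₁, hq₂, hq₃, hq₄⟩ := hq
  obtain ⟨hp₁, hp₂, hp₃, hp₄⟩ := hp
  calc dist q p = √(dist (q 0) (p 0) ^ 2 + dist (q 1) (p 1) ^ 2) := by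
        rw [EuclideanSpace.dist_eq, Fin.sum_univ_two]
    _ ≤ √(2 * (1 / m) ^ 2) :=
        Real.sqrt_le_sqrt (by linarith [coord hq₁ hq₂ hp₁ hp₂, coord hq₃ hq₄ hp₃ hp₄])
    _ = √2 / m := by
        rw [Real.sqrt_mul zero_le_two, Real.sqrt_sq (by positivity), mul_one_div]

lemma measureReal_closedBall_sdiff_ball_le (x : ℝ²) {s R : ℝ} (hR : 0 ≤ R) (hsR : s ≤ R) :
    volume.real (closedBall x R \ ball x s) ≤ 2 * π * R * (R - s) := by
  rw [measureReal_sdiff (ball_subset_closedBall.trans (closedBall_subset_closedBall hsR))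
    measurableSet_ball measure_closedBall_lt_top.ne]
  simp only [measureReal_def, EuclideanSpace.volume_closedBall_fin_two,
    EuclideanSpace.volume_ball_fin_two, ENNReal.toReal_mul, ENNReal.toReal_pow,
    ENNReal.toReal_ofReal hR, ENNReal.toReal_ofReal pi_pos.le]
  rcases le_total s 0 with hs | hs
  · rw [ENNReal.toReal_ofReal', max_eq_right hs]
    nlinarith [mul_nonneg (mul_nonneg pi_pos.le hR) (by linarith : 0 ≤ R - 2 * s)]
  · rw [ENNReal.toReal_ofReal hs]
    nlinarith [mul_nonneg pi_pos.le (sq_nonneg (R - s))]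

lemma card_cellsMeeting_annulus_le (m : ℕ) (v : ℝ²) {σ ρ : ℝ} (hρ : 0 ≤ ρ) (hσρ : σ ≤ ρ) :
    (#(cellsMeeting m {p | dist p v ∈ Set.Icc σ ρ}) : ℝ) ≤
      2 * π * m ^ 2 * (ρ + √2 / m) * (ρ - σ + 2 * (√2 / m)) := by
  set c := √2 / m
  have hsub : ∀ ij ∈ cellsMeeting m {p | dist p v ∈ Set.Icc σ ρ},
      openCell m ij.1 ij.2 ⊆ closedBall v (ρ + c) \ ball v (σ - c) := by
    intro ij hij q hq
    obtain ⟨-, p, ⟨hpσ, hpρ⟩, hp⟩ := mem_filter.1 hij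
    have hqp := dist_le_of_mem_openCell_of_inCell hq hp
    have := dist_triangle q p v
    have := dist_triangle p q v
    rw [dist_comm p q] at this
    simp only [Set.mem_sdiff, mem_closedBall, mem_ball, not_lt]
    constructor <;> linarith
  have hc : 0 ≤ c := by positivity
  calc _ ≤ m ^ 2 * volume.real (closedBall v (ρ + c) \ ball v (σ - c)) :=
        card_le_sq_mul_measureReal _ (measure_ne_top_of_subset Set.sdiff_subset
          measure_closedBall_lt_top.ne) hsub
    _ ≤ m ^ 2 * (2 * π * (ρ + c) * (ρ + c - (σ - c))) := by
        gcongr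
        exact measureReal_closedBall_sdiff_ball_le v (by positivity) (by linarith)
    _ = _ := by ring

lemma dist_mem_Icc_of_xor {X : Type*} [PseudoMetricSpace X] {p v u : X} {r : ℝ}
    (h : Xor (dist p v ≤ r) (dist p u ≤ r)) :
    dist p v ∈ Set.Icc (r - dist v u) (r + dist v u) := by
  have := dist_triangle p v u
  have := dist_triangle p u v
  rw [dist_comm u v] at this
  rcases h with ⟨hv, hu⟩ | ⟨hu, hv⟩
  · have := not_le.1 hu
    constructor <;> linarith
  · have := not_le.1 hv
    constructor <;> linarith

lemma card_filter_xor_le {X : Type*} [PseudoMetricSpace X] [DecidableEq X] (P : Finset X)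
    (v u : X) (r : ℝ) :
    #(P.filter fun p => Xor (p ≠ v ∧ dist p v ≤ r) (p ≠ u ∧ dist p u ≤ r)) ≤
      #(P.filter (· ∈ {q | dist q v ∈ Set.Icc (r - dist v u) (r + dist v u)})) + 2 := by
  set A := {q | dist q v ∈ Set.Icc (r - dist v u) (r + dist v u)}
  have hsub : P.filter (fun p => Xor (p ≠ v ∧ dist p v ≤ r) (p ≠ u ∧ dist p u ≤ r)) ⊆
      insert v (insert u (P.filter (· ∈ A))) := by
    intro p hp
    obtain ⟨hpP, hxor⟩ := mem_filter.1 hp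
    by_cases hpv : p = v
    · subst hpv
      exact mem_insert_self _ _
    by_cases hpu : p = u
    · subst hpu
      exact mem_insert_of_mem (mem_insert_self _ _)
    simp only [hpv, hpu, ne_eq, not_false_eq_true, true_and] at hxor
    exact mem_insert_of_mem (mem_insert_of_mem (mem_filter.2 ⟨hpP, dist_mem_Icc_of_xor hxor⟩))
  calc _ ≤ #(insert v (insert u (P.filter (· ∈ A)))) := card_le_card hsub
    _ ≤ #(insert u (P.filter (· ∈ A))) + 1 := card_insert_le _ _
    _ ≤ #(P.filter (· ∈ A)) + 2 := by grw [card_insert_le]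

lemma card_cellsMeeting_annulus_sub_add_le {m : ℕ} (hm : 0 < m) (v : ℝ²) {r d : ℝ} (hd : 0 ≤ d)
    (hdr : d ≤ r) :
    (#(cellsMeeting m {p | dist p v ∈ Set.Icc (r - d) (r + d)}) : ℝ) ≤
      80 * (r * d * m ^ 2 + r * m + 1) := by
  have hm' : (0 : ℝ) < m := Nat.cast_pos.2 hm
  have hsqrt2 : √2 ≤ 3 / 2 := by
    rw [Real.sqrt_le_left (by norm_num)]
    norm_num
  have hx : 0 ≤ m * r := mul_nonneg hm'.le (hd.trans hdr)
  have hy : 0 ≤ m * d := by positivity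
  have hyx : m * d ≤ m * r := by gcongr
  have hpoly : (m * r + m * d + √2) * (m * d + √2) ≤ 5 * (r * d * m ^ 2 + r * m + 1) := by
    nlinarith [Real.sq_sqrt (zero_le_two : (0 : ℝ) ≤ 2), Real.sqrt_nonneg 2,
      mul_le_mul_of_nonneg_left hyx hy, mul_le_mul_of_nonneg_left hyx (Real.sqrt_nonneg 2)]
  calc _ ≤ 2 * π * m ^ 2 * (r + d + √2 / m) * (r + d - (r - d) + 2 * (√2 / m)) :=
        card_cellsMeeting_annulus_le m v (by linarith) (by linarith)
    _ = 4 * π * ((m * r + m * d + √2) * (m * d + √2)) := by field_simp; ring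
    _ ≤ 4 * 4 * (5 * (r * d * m ^ 2 + r * m + 1)) := by
        gcongr ?_ * ?_
        linarith [pi_le_four]
    _ = 80 * (r * d * m ^ 2 + r * m + 1) := by ring

/-- There is an absolute constant `C` such that in the uniform disk graph of radius `r` on an
`n = m²`-point set `P` in the unit square with at most `b` points per grid cell (vertices are
points of `P`, adjacent iff distinct and at distance ≤ r): for any edge `{v, u}`, the number
of vertices adjacent to exactly one of `v, u` is at most `C·b·(r·‖v−u‖·n + r·√n + 1)`. -/
theorem disk_graph_hamming_bound :
    ∃ C : ℝ, 0 < C ∧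
      ∀ (m b : ℕ) (P : Finset (EuclideanSpace ℝ (Fin 2))) (r : ℝ), 0 < r →
        P.card = m ^ 2 →
        (∀ p ∈ P, ∀ i, 0 ≤ p i ∧ p i ≤ 1) →
        (∀ i j : Fin m, (P.filter (fun p => InCell m i j p)).card ≤ b) →
        ∀ v ∈ P, ∀ u ∈ P, dist v u ≤ r →
          ((P.filter fun p =>
              Xor' (p ≠ v ∧ dist p v ≤ r) (p ≠ u ∧ dist p u ≤ r)).card : ℝ) ≤
            C * (b : ℝ) * (r * dist v u * (m ^ 2 : ℝ) + r * Real.sqrt ((m : ℝ) ^ 2) + 1) := by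
  refine ⟨82, by norm_num, ?_⟩
  intro m b P r hr hcard hP hb v hv u hu hvu
  have hm : 0 < m := Nat.pos_of_ne_zero (by rintro rfl; simp_all)
  have hb₁ : (1 : ℝ) ≤ b := by
    obtain ⟨i, j, hv_ij⟩ := exists_inCell hm (hP v hv)
    exact_mod_cast (card_pos.2 ⟨v, mem_filter.2 ⟨hv, hv_ij⟩⟩).trans_le (hb i j)
  set d := dist v u
  have hd : 0 ≤ d := dist_nonneg
  set A : Set ℝ² := {p | dist p v ∈ Set.Icc (r - d) (r + d)}
  rw [Real.sqrt_sq (Nat.cast_nonneg m)]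
  set K := r * d * (m ^ 2 : ℝ) + r * m + 1
  have hK : 1 ≤ K := by
    have : 0 ≤ r * d * (m ^ 2 : ℝ) + r * m := by positivity
    linarith
  have hcells : (#(cellsMeeting m A) : ℝ) ≤ 80 * K :=
    card_cellsMeeting_annulus_sub_add_le hm v hd hvu
  refine le_trans (Nat.cast_le.2 (?_ : _ ≤ #(P.filter (· ∈ A)) + 2)) ?_
  · -- the statement's filter carries the classical `DecidablePred` instance
    convert card_filter_xor_le P v u r
    exact Iff.rfl
  calc ((#(P.filter (· ∈ A)) + 2 : ℕ) : ℝ) ≤ #(cellsMeeting m A) * b + 2 := by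
        exact_mod_cast Nat.add_le_add_right (card_filter_mem_le_card_cellsMeeting_mul hm hP hb A) 2
    _ ≤ 80 * K * b + 2 * K * b := by
        gcongr
        nlinarith
    _ = 82 * b * K := by ring
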